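/- arXiv:0711.0765 — 5 statements merged into one kernel-verified Lean document; each statement's English description precedes it below -/
import Mathlib

section
/- Let p be a prime and a an integer with 0 < a < p. Then s(a,p) = (1/(12ap))(p-1)(2pa² - a² - 3ap + 2p - 1) - (1/(2a))·Σ_{i=1}^{p-1} [a·i/p]². -/
/-- The sawtooth function `((x)) = x - ⌊x⌋ - 1/2` for non-integer `x`, and `0` for integer `x`. -/
def saw (x : ℚ) : ℚ := if x.den = 1 then 0 else x - ⌊x⌋ - 1/2

/-- The Dedekind sum `s(q,p) = Σ_{i=1}^{p-1} ((i/p))((iq/p))`. -/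
noncomputable def dedekindSum (q p : ℤ) : ℚ :=
  ∑ i ∈ Finset.Icc (1 : ℤ) (p - 1), saw ((i : ℚ) / p) * saw ((i * q : ℚ) / p)

/-!
Write `r_i = ai mod p`. For `0 < i < p` one has `((i/p)) = i/p - 1/2`, `((ai/p)) = r_i/p - 1/2`
and `⌊ai/p⌋ = (ai - r_i)/p`. Expanding, the mixed term `i r_i` of `s(a,p)` is `-1/2a` times that
of `Σ ⌊ai/p⌋²`, so `s(a,p) + Σ ⌊ai/p⌋² / 2a` only involves `Σ i`, `Σ i²`, `Σ r_i`, `Σ r_i²`.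
Since `a` is a unit mod `p`, `i ↦ r_i` permutes `1, …, p - 1`, and all four are classical
power sums.
-/

open Finset

theorem Int.cast_floor_intCast_div_natCast {k : Type*} [Field k] [LinearOrder k]
    [IsOrderedRing k] [FloorRing k] (m : ℤ) (n : ℕ) :
    (⌊(m : k) / n⌋ : k) = ((m - m % n : ℤ) : k) / n := by
  rw [← Int.self_sub_fract, Int.fract_div_intCast_eq_div_intCast_mod, Int.cast_sub, sub_div]

theorem saw_intCast_div_natCast {m : ℤ} {n : ℕ} (hn : n ≠ 0) (hm : ¬ (n : ℤ) ∣ m) :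
    saw (m / n) = ((m % n : ℤ) : ℚ) / n - 1 / 2 := by
  have hden := Rat.den_div_intCast_eq_one_iff m n (by exact_mod_cast hn)
  rw [Int.cast_natCast] at hden
  rw [saw, if_neg (hden.not.mpr hm), Int.self_sub_floor, Int.fract_div_intCast_eq_div_intCast_mod]

theorem sum_Icc_one_quadratic (c₀ c₁ c₂ : ℚ) {m : ℤ} (hm : 0 ≤ m) :
    ∑ i ∈ Icc 1 m, (c₂ * (i : ℚ) ^ 2 + c₁ * i + c₀) =
      c₂ * m * (m + 1) * (2 * m + 1) / 6 + c₁ * m * (m + 1) / 2 + c₀ * m := by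
  induction m, hm using Int.leInduction with
  | base => simp
  | succ m hm ih =>
    rw [← insert_Icc_right_eq_Icc_add_one (by omega), sum_insert (by simp), ih]
    push_cast
    ring

theorem sum_comp_mul_emod {M : Type*} [AddCommMonoid M] {a n : ℤ} (ha : IsCoprime a n)
    (f : ℤ → M) : ∑ i ∈ Icc 1 (n - 1), f (a * i % n) = ∑ i ∈ Icc 1 (n - 1), f i := by
  have hmaps : ∀ i ∈ Icc 1 (n - 1), a * i % n ∈ Icc 1 (n - 1) := by
    intro i hi
    rw [mem_Icc] at hi ⊢
    have hn : 0 < n := by omega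
    have hne : a * i % n ≠ 0 := fun h =>
      have := Int.le_of_dvd (by omega) (ha.symm.dvd_of_dvd_mul_left (Int.dvd_of_emod_eq_zero h))
      by omega
    have := Int.emod_nonneg (a * i) hn.ne'
    have := Int.emod_lt_of_pos (a * i) hn
    omega
  have hinj : Set.InjOn (fun i => a * i % n) (Icc 1 (n - 1)) := by
    intro i hi j hj hij
    simp only [coe_Icc, Set.mem_Icc] at hi hj
    have hdvd : n ∣ j - i :=
      ha.symm.dvd_of_dvd_mul_left (by rw [mul_sub]; exact Int.ModEq.dvd hij)
    have := Int.eq_zero_of_abs_lt_dvd hdvd (abs_lt.mpr ⟨by omega, by omega⟩)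
    omega
  exact sum_nbij _ hmaps hinj (surjOn_of_injOn_of_card_le _ hmaps hinj le_rfl) fun _ _ => rfl

theorem dedekindSum_eq_sum_emod {a : ℤ} {n : ℕ} (ha : IsCoprime a n) :
    dedekindSum a n =
      ∑ i ∈ Icc 1 ((n : ℤ) - 1), ((i : ℚ) / n - 1 / 2) * (((a * i % n : ℤ) : ℚ) / n - 1 / 2) := by
  refine sum_congr rfl fun i hi => ?_
  rw [mem_Icc] at hi
  have hn : n ≠ 0 := by omega
  have hi_ndvd : ¬ (n : ℤ) ∣ i := fun h => by have := Int.le_of_dvd (by omega) h; omega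
  have hai_ndvd : ¬ (n : ℤ) ∣ a * i := fun h => hi_ndvd (ha.symm.dvd_of_dvd_mul_left h)
  rw [Int.cast_natCast, ← Int.cast_mul, mul_comm i a, saw_intCast_div_natCast hn hi_ndvd,
    saw_intCast_div_natCast hn hai_ndvd, Int.emod_eq_of_lt (by omega) (by omega)]

theorem stmt6 (p : ℕ) (hp : p.Prime) (a : ℤ) (ha0 : 0 < a) (hap : a < p) :
    dedekindSum a p =
      (1 / (12 * (a : ℚ) * p)) * ((p : ℚ) - 1) *
          (2 * p * a ^ 2 - a ^ 2 - 3 * a * p + 2 * p - 1) -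
        (1 / (2 * (a : ℚ))) *
          ∑ i ∈ Finset.Icc (1 : ℤ) ((p : ℤ) - 1), (⌊(a * i : ℚ) / p⌋ : ℚ) ^ 2 := by
  have hcop : IsCoprime a p := by
    refine ((Nat.prime_iff_prime_int.mp hp).coprime_iff_not_dvd.mpr fun h => ?_).symm
    have := Int.le_of_dvd ha0 h
    omega
  have hp0 : (p : ℚ) ≠ 0 := by exact_mod_cast hp.ne_zero
  have ha : (a : ℚ) ≠ 0 := by exact_mod_cast ha0.ne'
  have hp1 : (0 : ℤ) ≤ p - 1 := by have := hp.one_lt; omega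
  have key :
      dedekindSum a p + 1 / (2 * a) * ∑ i ∈ Icc (1 : ℤ) (p - 1), (⌊(a * i : ℚ) / p⌋ : ℚ) ^ 2 =
        ∑ i ∈ Icc (1 : ℤ) (p - 1),
          ((a ^ 2 + 1) / (2 * a * p ^ 2) * (i : ℚ) ^ 2 + -1 / p * i + 1 / 4) :=
    calc
      _ = ∑ i ∈ Icc (1 : ℤ) (p - 1), ((a / (2 * p ^ 2) * (i : ℚ) ^ 2 - 1 / (2 * p) * i + 1 / 4) +
            (1 / (2 * a * p ^ 2) * ((a * i % p : ℤ) : ℚ) ^ 2 -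
              1 / (2 * p) * ((a * i % p : ℤ) : ℚ))) := by
        rw [dedekindSum_eq_sum_emod hcop, mul_sum, ← sum_add_distrib]
        refine sum_congr rfl fun i _ => ?_
        rw [← Int.cast_mul, Int.cast_floor_intCast_div_natCast]
        field_simp
        push_cast
        ring
      _ = ∑ i ∈ Icc (1 : ℤ) (p - 1), ((a / (2 * p ^ 2) * (i : ℚ) ^ 2 - 1 / (2 * p) * i + 1 / 4) +
            (1 / (2 * a * p ^ 2) * (i : ℚ) ^ 2 - 1 / (2 * p) * i)) := by
        simp only [sum_add_distrib,
          sum_comp_mul_emod hcop fun j => 1 / (2 * a * p ^ 2) * (j : ℚ) ^ 2 - 1 / (2 * p) * j]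
      _ = _ := sum_congr rfl fun i _ => by field_simp; ring
  rw [sum_Icc_one_quadratic _ _ _ hp1] at key
  rw [eq_sub_iff_add_eq, key]
  push_cast
  field_simp
  ring
end

section
/- Let p be a prime and a, b integers with 0 < a, b < p. Let a' denote the inverse of a modulo p with 0 < a' < p. Then Σ_{i=1}^{p-1} [a·i/p]·[b·i/p] = s(a'b, p) - a·s(b,p) - b·s(a,p) + (p-1)/(12p)·(3p - 3pa - 3pb + 2ab(2p-1)), where a'b is taken modulo p in {1,...,p-1}. -/
/-!
For `c` prime to `p` and `1 ≤ i ≤ p - 1`, `⌊ci/p⌋ = ci/p - ((ci/p)) - 1/2` and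
`i = p ((i/p)) + p/2`. Expanding the product of the two floors, the sum splits into power sums
of `i`, sums `Σ ((ci/p))`, which vanish because multiplication by `c` permutes the nonzero
residues, sums `Σ i ((ci/p)) = p s(c,p)`, and `Σ ((ai/p))((bi/p))`, which the substitution
`i ↦ a'i` turns into `s(a'b,p)`.
-/

open Finset

lemma saw_add_intCast (x : ℚ) (k : ℤ) : saw (x + k) = saw x := by
  have hden : (x + k).den = x.den := by simp
  unfold saw
  rw [hden, Int.floor_add_intCast]
  split_ifs <;> push_cast <;> ring

lemma saw_intCast_div_of_not_dvd {m : ℤ} {n : ℕ} (hn : n ≠ 0) (h : ¬ (n : ℤ) ∣ m) :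
    saw (m / n) = m / n - ⌊(m : ℚ) / n⌋ - 1 / 2 := by
  have hden := (Rat.den_div_intCast_eq_one_iff m n (by exact_mod_cast hn)).not.mpr h
  rw [Int.cast_natCast] at hden
  exact if_neg hden

lemma saw_intCast_div_congr {m m' : ℤ} {n : ℕ} (h : m ≡ m' [ZMOD n]) :
    saw (m / n) = saw (m' / n) := by
  obtain ⟨k, hk⟩ := Int.modEq_iff_dvd.mp h
  rcases eq_or_ne n 0 with rfl | hn
  · simp
  have : (m' : ℚ) / n = m / n + k := by
    rw [show m' = m + n * k by linarith]
    push_cast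
    field_simp
  rw [this, saw_add_intCast]

lemma not_dvd_of_mem_Icc {i : ℤ} {n : ℕ} (hi : i ∈ Icc (1 : ℤ) (n - 1)) :
    ¬ (n : ℤ) ∣ i := fun hdvd => by
  rw [mem_Icc] at hi
  have := Int.le_of_dvd (by omega) hdvd
  omega

lemma not_dvd_mul_of_isCoprime {c i : ℤ} {n : ℕ} (hc : IsCoprime c n)
    (hi : i ∈ Icc (1 : ℤ) (n - 1)) : ¬ (n : ℤ) ∣ c * i :=
  fun hdvd => not_dvd_of_mem_Icc hi (hc.symm.dvd_of_dvd_mul_left hdvd)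

lemma emod_mem_Icc_of_isCoprime {c i : ℤ} {n : ℕ} (hc : IsCoprime c n)
    (hi : i ∈ Icc (1 : ℤ) (n - 1)) : c * i % n ∈ Icc (1 : ℤ) (n - 1) := by
  have hdvd := not_dvd_mul_of_isCoprime hc hi
  rw [mem_Icc] at hi ⊢
  have h0 := Int.emod_nonneg (c * i) (show (n : ℤ) ≠ 0 by omega)
  have hlt := Int.emod_lt_of_pos (c * i) (show (0 : ℤ) < n by omega)
  have hne : c * i % n ≠ 0 := fun h => hdvd (Int.dvd_of_emod_eq_zero h)
  omega

lemma emod_mul_emod_eq_of_mul_modEq_one {u c i : ℤ} {n : ℕ} (h : u * c ≡ 1 [ZMOD n])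
    (hi : i ∈ Icc (1 : ℤ) (n - 1)) : u * (c * i % n) % n = i := by
  rw [mem_Icc] at hi
  have : u * (c * i % n) ≡ i [ZMOD n] :=
    calc u * (c * i % n) ≡ u * (c * i) [ZMOD n] := (Int.mod_modEq _ _).mul_left u
      _ = (u * c) * i := by ring
      _ ≡ 1 * i [ZMOD n] := h.mul_right i
      _ = i := one_mul i
  rw [this, Int.emod_eq_of_lt (by omega) (by omega)]

lemma sum_Icc_comp_mul_of_isCoprime {M : Type*} [AddCommMonoid M] {c : ℤ} {n : ℕ}
    (hc : IsCoprime c n) {F : ℤ → M} (hF : ∀ m m', m ≡ m' [ZMOD n] → F m = F m') :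
    ∑ i ∈ Icc (1 : ℤ) (n - 1), F (c * i) = ∑ i ∈ Icc (1 : ℤ) (n - 1), F i := by
  obtain ⟨u, v, huv⟩ := hc
  have hu : u * c ≡ 1 [ZMOD n] := Int.modEq_iff_dvd.mpr ⟨v, by rw [← huv]; ring⟩
  have huc : IsCoprime u n := ⟨c, v, by linarith⟩
  refine sum_nbij' (fun i => c * i % n) (fun i => u * i % n)
    (fun i hi => emod_mem_Icc_of_isCoprime ⟨u, v, huv⟩ hi)
    (fun i hi => emod_mem_Icc_of_isCoprime huc hi)
    (fun i hi => emod_mul_emod_eq_of_mul_modEq_one hu hi)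
    (fun i hi => emod_mul_emod_eq_of_mul_modEq_one (by rwa [mul_comm] at hu) hi)
    (fun i _ => hF _ _ (Int.mod_modEq _ _).symm)

lemma saw_div_of_mem_Icc {i : ℤ} {n : ℕ} (hi : i ∈ Icc (1 : ℤ) (n - 1)) :
    saw (i / n) = i / n - 1 / 2 := by
  have hdvd := not_dvd_of_mem_Icc hi
  rw [mem_Icc] at hi
  have hn : (0 : ℚ) < n := by exact_mod_cast (show 0 < n by omega)
  have hfloor : ⌊(i : ℚ) / n⌋ = 0 := by
    rw [Int.floor_eq_zero_iff, Set.mem_Ico, div_lt_one hn]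
    refine ⟨div_nonneg ?_ hn.le, ?_⟩ <;> exact_mod_cast (by omega)
  rw [saw_intCast_div_of_not_dvd (by omega) hdvd, hfloor, Int.cast_zero, sub_zero]

lemma floor_mul_div_eq {c i : ℤ} {n : ℕ} (hc : IsCoprime c n)
    (hi : i ∈ Icc (1 : ℤ) (n - 1)) :
    (⌊(c * i : ℚ) / n⌋ : ℚ) = c * i / n - saw (c * i / n) - 1 / 2 := by
  have hn : n ≠ 0 := by rw [mem_Icc] at hi; omega
  have := saw_intCast_div_of_not_dvd hn (not_dvd_mul_of_isCoprime hc hi)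
  push_cast at this
  linarith

lemma sum_Icc_one_add_one {M : Type*} [AddCommMonoid M] (f : ℤ → M) {m : ℤ} (hm : 0 ≤ m) :
    ∑ i ∈ Icc 1 (m + 1), f i = ∑ i ∈ Icc 1 m, f i + f (m + 1) := by
  rw [← insert_Icc_right_eq_Icc_add_one (by omega), sum_insert (by simp), add_comm]

lemma sum_Icc_one_const (c : ℚ) (m : ℤ) (hm : 0 ≤ m) :
    ∑ _i ∈ Icc (1 : ℤ) m, c = m * c := by
  induction m, hm using Int.leInduction with
  | base => simp
  | succ m hm ih => rw [sum_Icc_one_add_one _ hm, ih]; push_cast; ring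

lemma sum_Icc_one_id (m : ℤ) (hm : 0 ≤ m) :
    ∑ i ∈ Icc (1 : ℤ) m, (i : ℚ) = m * (m + 1) / 2 := by
  induction m, hm using Int.leInduction with
  | base => simp
  | succ m hm ih => rw [sum_Icc_one_add_one _ hm, ih]; push_cast; ring

lemma sum_Icc_one_sq (m : ℤ) (hm : 0 ≤ m) :
    ∑ i ∈ Icc (1 : ℤ) m, (i : ℚ) ^ 2 = m * (m + 1) * (2 * m + 1) / 6 := by
  induction m, hm using Int.leInduction with
  | base => simp
  | succ m hm ih => rw [sum_Icc_one_add_one _ hm, ih]; push_cast; ring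

lemma sum_saw_div (n : ℕ) : ∑ i ∈ Icc (1 : ℤ) (n - 1), saw (i / n) = 0 := by
  rcases Nat.eq_zero_or_pos n with rfl | hn
  · simp
  rw [sum_congr rfl fun i hi => saw_div_of_mem_Icc hi, sum_sub_distrib, ← sum_div,
    sum_Icc_one_id _ (by omega), sum_Icc_one_const _ _ (by omega)]
  field_simp
  push_cast
  ring

lemma sum_saw_mul_div_of_isCoprime {c : ℤ} {n : ℕ} (hc : IsCoprime c n) :
    ∑ i ∈ Icc (1 : ℤ) (n - 1), saw (c * i / n) = 0 := by
  have := sum_Icc_comp_mul_of_isCoprime hc (F := fun m => saw (m / n))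
    fun _ _ h => saw_intCast_div_congr h
  push_cast at this
  rw [this, sum_saw_div]

lemma dedekindSum_natCast (q : ℤ) (n : ℕ) :
    dedekindSum q n = ∑ i ∈ Icc (1 : ℤ) (n - 1), saw (i / n) * saw (q * i / n) := by
  simp only [dedekindSum, Int.cast_natCast, mul_comm (q : ℚ)]

lemma sum_mul_saw_mul_div_of_isCoprime {b : ℤ} {n : ℕ} (hb : IsCoprime b n) :
    ∑ i ∈ Icc (1 : ℤ) (n - 1), i * saw (b * i / n) = n * dedekindSum b n := by
  have hi : ∀ i ∈ Icc (1 : ℤ) (n - 1), (i : ℚ) * saw (b * i / n) =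
      n * (saw (i / n) * saw (b * i / n)) + n / 2 * saw (b * i / n) := fun i hi => by
    have hn : (n : ℚ) ≠ 0 := by rw [mem_Icc] at hi; exact_mod_cast (show n ≠ 0 by omega)
    rw [saw_div_of_mem_Icc hi]
    field_simp
    ring
  rw [sum_congr rfl hi, sum_add_distrib, ← mul_sum, ← mul_sum, dedekindSum_natCast,
    sum_saw_mul_div_of_isCoprime hb, mul_zero, add_zero]

lemma isCoprime_of_mul_modEq_one {a a' n : ℤ} (h : a * a' ≡ 1 [ZMOD n]) : IsCoprime a n := by
  obtain ⟨k, hk⟩ := Int.modEq_iff_dvd.mp h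
  exact ⟨a', k, by linear_combination -hk⟩

lemma sum_saw_mul_saw_of_mul_modEq_one {a a' : ℤ} {n : ℕ} (hinv : a * a' ≡ 1 [ZMOD n])
    (b : ℤ) :
    ∑ i ∈ Icc (1 : ℤ) (n - 1), saw (a * i / n) * saw (b * i / n) =
      dedekindSum (a' * b) n := by
  have ha : IsCoprime a n := isCoprime_of_mul_modEq_one hinv
  have hterm : ∀ i : ℤ, b * i ≡ a' * b * (a * i) [ZMOD n] := fun i =>
    calc b * i = 1 * (b * i) := (one_mul _).symm
      _ ≡ a * a' * (b * i) [ZMOD n] := (hinv.mul_right _).symm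
      _ = a' * b * (a * i) := by ring
  have hperm := sum_Icc_comp_mul_of_isCoprime ha
    (F := fun m => saw (m / n) * saw ((a' * b * m : ℤ) / n)) fun m m' h => by
      rw [saw_intCast_div_congr h, saw_intCast_div_congr (h.mul_left (a' * b))]
  rw [dedekindSum_natCast]
  push_cast at hperm ⊢
  rw [← hperm]
  refine sum_congr rfl fun i _ => ?_
  have hsaw := saw_intCast_div_congr (n := n) (hterm i)
  push_cast at hsaw
  rw [hsaw]

theorem stmt7_general (p : ℕ) (hp : p.Prime) (a b a' : ℤ)
    (hb0 : 0 < b) (hbp : b < p)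
    (hinv : a * a' ≡ 1 [ZMOD (p : ℤ)]) :
    ∑ i ∈ Finset.Icc (1 : ℤ) ((p : ℤ) - 1),
        (⌊(a * i : ℚ) / p⌋ : ℚ) * (⌊(b * i : ℚ) / p⌋ : ℚ) =
      dedekindSum (a' * b) p - (a : ℚ) * dedekindSum b p - (b : ℚ) * dedekindSum a p +
        ((p : ℚ) - 1) / (12 * p) *
          (3 * p - 3 * p * a - 3 * p * b + 2 * a * b * (2 * p - 1)) := by
  have hp1 : (0 : ℤ) ≤ p - 1 := by have := hp.one_lt; omega
  have hp0 : (p : ℚ) ≠ 0 := by exact_mod_cast hp.ne_zero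
  have ha : IsCoprime a p := isCoprime_of_mul_modEq_one hinv
  have hb : IsCoprime b p :=
    ((Nat.prime_iff_prime_int.mp hp).coprime_iff_not_dvd.mpr
      fun h => by have := Int.le_of_dvd hb0 h; omega).symm
  rw [sum_congr rfl fun i hi => by rw [floor_mul_div_eq ha hi, floor_mul_div_eq hb hi]]
  have expand : ∀ i : ℤ,
      ((a * i / p - saw (a * i / p) - 1 / 2) * (b * i / p - saw (b * i / p) - 1 / 2) : ℚ) =
        a * b / p ^ 2 * i ^ 2 - (a + b) / (2 * p) * i + 1 / 4
          - a / p * (i * saw (b * i / p)) - b / p * (i * saw (a * i / p))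
          + saw (a * i / p) * saw (b * i / p)
          + 1 / 2 * saw (a * i / p) + 1 / 2 * saw (b * i / p) :=
    fun i => by field_simp; ring
  simp only [expand, sum_add_distrib, sum_sub_distrib, ← mul_sum]
  rw [sum_Icc_one_sq _ hp1, sum_Icc_one_id _ hp1, sum_Icc_one_const _ _ hp1,
    sum_mul_saw_mul_div_of_isCoprime ha, sum_mul_saw_mul_div_of_isCoprime hb,
    sum_saw_mul_saw_of_mul_modEq_one hinv, sum_saw_mul_div_of_isCoprime ha,
    sum_saw_mul_div_of_isCoprime hb]
  field_simp
  push_cast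
  ring

theorem stmt7 (p : ℕ) (hp : p.Prime) (a b a' : ℤ)
    (ha0 : 0 < a) (hap : a < p) (hb0 : 0 < b) (hbp : b < p)
    (ha'0 : 0 < a') (ha'p : a' < p) (hinv : a * a' ≡ 1 [ZMOD (p : ℤ)]) :
    ∑ i ∈ Finset.Icc (1 : ℤ) ((p : ℤ) - 1),
        (⌊(a * i : ℚ) / p⌋ : ℚ) * (⌊(b * i : ℚ) / p⌋ : ℚ) =
      dedekindSum (a' * b) p - (a : ℚ) * dedekindSum b p - (b : ℚ) * dedekindSum a p +
        ((p : ℚ) - 1) / (12 * p) *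
          (3 * p - 3 * p * a - 3 * p * b + 2 * a * b * (2 * p - 1)) :=
  stmt7_general p hp a b a' hb0 hbp hinv
end

section
/- Let p be prime, 0 < q < p, and let q' be the inverse of q modulo p with 0 < q' < p. If the negative-regular continued fraction of p/q is [e_1,...,e_s], then the negative-regular continued fraction of p/q' is [e_s,...,e_1]. -/
/-!
Since `x ↦ e - 1/x` is the Möbius map of `!![e, -1; 1, 0]`, the first column of the product
`M = !![e₁, -1; 1, 0] ⋯ !![eₛ, -1; 1, 0]` is `(p, q)`, and `det M = 1`. Each factor satisfies
`Aᵀ = J A J` with `J = diag(1, -1)`, so the product for the reversed list is `J Mᵀ J`, whose first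
column is `(p, -M₀₁)`. The determinant gives `q · (-M₀₁) ≡ 1 [ZMOD p]`, and `0 ≤ -M₀₁ < p` because the
entries are at least `2`; hence `-M₀₁ = q'`.
-/

/-- The value of the negative-regular continued fraction
`[e_1,...,e_s] = e_1 - 1/(e_2 - 1/(⋯ - 1/e_s))`. -/
def ncf : List ℤ → ℚ
  | [] => 0
  | [e] => (e : ℚ)
  | e :: f :: rest => (e : ℚ) - 1 / ncf (f :: rest)

open Matrix

def stepMatrix (e : ℤ) : Matrix (Fin 2) (Fin 2) ℤ := !![e, -1; 1, 0]

def continuantMatrix (l : List ℤ) : Matrix (Fin 2) (Fin 2) ℤ := (l.map stepMatrix).prod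

@[simp] lemma continuantMatrix_nil : continuantMatrix [] = 1 := rfl

@[simp] lemma continuantMatrix_cons (e : ℤ) (l : List ℤ) :
    continuantMatrix (e :: l) = stepMatrix e * continuantMatrix l := by
  simp [continuantMatrix]

lemma det_continuantMatrix (l : List ℤ) : (continuantMatrix l).det = 1 := by
  induction l with
  | nil => simp
  | cons e l ih => rw [continuantMatrix_cons, det_mul, ih, stepMatrix, det_fin_two_of]; ring

lemma stepMatrix_transpose (e : ℤ) :
    (stepMatrix e)ᵀ = !![1, 0; 0, -1] * stepMatrix e * !![1, 0; 0, -1] := by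
  simp [stepMatrix, ← Matrix.ext_iff, Fin.forall_fin_two]

lemma continuantMatrix_reverse (l : List ℤ) :
    continuantMatrix l.reverse = !![1, 0; 0, -1] * (continuantMatrix l)ᵀ * !![1, 0; 0, -1] := by
  induction l with
  | nil => simp [← Matrix.ext_iff, Fin.forall_fin_two]
  | cons e l ih =>
    have hJ : !![(1 : ℤ), 0; 0, -1] * !![1, 0; 0, -1] = 1 := by
      simp [← Matrix.ext_iff, Fin.forall_fin_two]
    simp only [List.reverse_cons, continuantMatrix, List.map_append, List.prod_append] at ih ⊢
    simp only [List.map_cons, List.map_nil, List.prod_cons, List.prod_nil, mul_one, ih,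
      transpose_mul, stepMatrix_transpose, Matrix.mul_assoc, hJ]

lemma continuantMatrix_reverse_apply_zero_zero (l : List ℤ) :
    continuantMatrix l.reverse 0 0 = continuantMatrix l 0 0 := by
  simp [continuantMatrix_reverse, Matrix.mul_apply, Matrix.vecMul, dotProduct, Fin.sum_univ_two]

lemma continuantMatrix_reverse_apply_one_zero (l : List ℤ) :
    continuantMatrix l.reverse 1 0 = -continuantMatrix l 0 1 := by
  simp [continuantMatrix_reverse, Matrix.mul_apply, Matrix.vecMul, dotProduct, Fin.sum_univ_two]

lemma continuantMatrix_cons_apply_zero_zero (e : ℤ) (l : List ℤ) :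
    continuantMatrix (e :: l) 0 0 = e * continuantMatrix l 0 0 - continuantMatrix l 1 0 := by
  simp [stepMatrix, Matrix.mul_apply, Fin.sum_univ_two]; ring

lemma continuantMatrix_cons_apply_one_zero (e : ℤ) (l : List ℤ) :
    continuantMatrix (e :: l) 1 0 = continuantMatrix l 0 0 := by
  simp [stepMatrix, Matrix.mul_apply, Fin.sum_univ_two]

lemma continuantMatrix_apply_one_zero_lt {l : List ℤ} (h2 : ∀ x ∈ l, 2 ≤ x) :
    0 ≤ continuantMatrix l 1 0 ∧ continuantMatrix l 1 0 < continuantMatrix l 0 0 := by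
  induction l with
  | nil => simp
  | cons e l ih =>
    obtain ⟨hc, hca⟩ := ih fun x hx => h2 x (List.mem_cons_of_mem e hx)
    have he : 2 ≤ e := h2 e List.mem_cons_self
    rw [continuantMatrix_cons_apply_zero_zero, continuantMatrix_cons_apply_one_zero]
    constructor <;> nlinarith

lemma ncf_eq_continuantMatrix_div {l : List ℤ} (hne : l ≠ []) (h2 : ∀ x ∈ l, 2 ≤ x) :
    ncf l = continuantMatrix l 0 0 / continuantMatrix l 1 0 := by
  induction l with
  | nil => exact absurd rfl hne
  | cons e l ih =>
    rw [continuantMatrix_cons_apply_zero_zero, continuantMatrix_cons_apply_one_zero]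
    match l, ih with
    | [], _ => simp [ncf]
    | f :: r, ih =>
      have h2' : ∀ x ∈ f :: r, 2 ≤ x := fun x hx => h2 x (List.mem_cons_of_mem e hx)
      have ha : (0 : ℚ) < continuantMatrix (f :: r) 0 0 := by
        have := continuantMatrix_apply_one_zero_lt h2'; exact_mod_cast this.1.trans_lt this.2
      rw [ncf, ih (List.cons_ne_nil f r) h2']
      field_simp
      push_cast; ring

lemma continuantMatrix_apply_one_zero_pos {l : List ℤ} (hne : l ≠ []) (h2 : ∀ x ∈ l, 2 ≤ x) :
    0 < continuantMatrix l 1 0 := by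
  obtain ⟨e, l, rfl⟩ := List.exists_cons_of_ne_nil hne
  obtain ⟨hc, hca⟩ := continuantMatrix_apply_one_zero_lt fun x hx => h2 x (List.mem_cons_of_mem e hx)
  rw [continuantMatrix_cons_apply_one_zero]
  exact hc.trans_lt hca

lemma neg_continuantMatrix_apply_zero_one_lt {l : List ℤ} (h2 : ∀ x ∈ l, 2 ≤ x) :
    0 ≤ -continuantMatrix l 0 1 ∧ -continuantMatrix l 0 1 < continuantMatrix l 0 0 := by
  simpa only [continuantMatrix_reverse_apply_zero_zero, continuantMatrix_reverse_apply_one_zero]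
    using continuantMatrix_apply_one_zero_lt fun x hx => h2 x (List.mem_reverse.mp hx)

lemma ncf_reverse_eq_continuantMatrix_div {l : List ℤ} (hne : l ≠ []) (h2 : ∀ x ∈ l, 2 ≤ x) :
    ncf l.reverse = continuantMatrix l 0 0 / (-continuantMatrix l 0 1 : ℤ) := by
  rw [ncf_eq_continuantMatrix_div (List.reverse_ne_nil_iff.mpr hne) fun x hx => h2 x (List.mem_reverse.mp hx),
    continuantMatrix_reverse_apply_zero_zero, continuantMatrix_reverse_apply_one_zero]

lemma Int.eq_of_mul_modEq_one {n a x y : ℤ} (hx : a * x ≡ 1 [ZMOD n]) (hy : a * y ≡ 1 [ZMOD n])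
    (hx0 : 0 ≤ x) (hxn : x < n) (hy0 : 0 ≤ y) (hyn : y < n) : x = y := by
  have hxy : x ≡ y [ZMOD n] :=
    calc x = x * 1 := (mul_one x).symm
      _ ≡ x * (a * y) [ZMOD n] := hy.symm.mul_left x
      _ = y * (a * x) := by ring
      _ ≡ y * 1 [ZMOD n] := hx.mul_left y
      _ = y := mul_one y
  rwa [Int.ModEq, Int.emod_eq_of_lt hx0 hxn, Int.emod_eq_of_lt hy0 hyn] at hxy

theorem stmt11_general (p : ℕ) (q q' : ℤ)
    (hq0 : 0 < q) (hq'0 : 0 < q') (hq'p : q' < p)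
    (hinv : q * q' ≡ 1 [ZMOD (p : ℤ)])
    (e : List ℤ) (hne : e ≠ []) (h2 : ∀ x ∈ e, 2 ≤ x)
    (hval : ncf e = (p : ℚ) / q) :
    ncf e.reverse = (p : ℚ) / q' := by
  rw [ncf_eq_continuantMatrix_div hne h2] at hval
  rw [ncf_reverse_eq_continuantMatrix_div hne h2]
  have hdet := det_continuantMatrix e
  rw [det_fin_two] at hdet
  have hden := continuantMatrix_apply_one_zero_pos hne h2
  have hrev := neg_continuantMatrix_apply_zero_one_lt h2
  generalize continuantMatrix e = M at *
  have hpq : IsCoprime (p : ℤ) q := by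
    obtain ⟨k, hk⟩ := hinv.dvd
    exact ⟨k, q', by linear_combination -hk⟩
  obtain ⟨ha, hc⟩ : M 0 0 = p ∧ M 1 0 = q :=
    Rat.div_int_inj hden hq0
      (Int.isCoprime_iff_gcd_eq_one.mp ⟨M 1 1, -M 0 1, by linear_combination hdet⟩)
      (Int.isCoprime_iff_gcd_eq_one.mp hpq) (by rw [hval, Int.cast_natCast])
  have hb : -M 0 1 = q' := by
    refine Int.eq_of_mul_modEq_one (Int.modEq_iff_dvd.mpr ⟨M 1 1, ?_⟩) hinv hrev.1
      (ha ▸ hrev.2) hq'0.le hq'p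
    linear_combination M 1 1 * ha - M 0 1 * hc - hdet
  rw [ha, hb, Int.cast_natCast]

theorem stmt11 (p : ℕ) (hp : p.Prime) (q q' : ℤ)
    (hq0 : 0 < q) (hqp : q < p) (hq'0 : 0 < q') (hq'p : q' < p)
    (hinv : q * q' ≡ 1 [ZMOD (p : ℤ)])
    (e : List ℤ) (hne : e ≠ []) (h2 : ∀ x ∈ e, 2 ≤ x)
    (hval : ncf e = (p : ℚ) / q) :
    ncf e.reverse = (p : ℚ) / q' :=
  stmt11_general p q q' hq0 hq'0 hq'p hinv e hne h2 hval
end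

section
/- Let p be prime, 0 < q < p, and p/q = [e_1,...,e_s] the negative-regular continued fraction. Let q' be the inverse of q mod p with 0 < q' < p, and let b_{-1}=p, b_0=q, b_{i-2}=b_{i-1}e_i - b_i (0 ≤ b_i < b_{i-1}) be the recursion defining the expansion, with b'_j the analogous sequence for p/q'. Define α_i = -1 + b_{i-1}/p + b'_{s-i}/p for 1 ≤ i ≤ s. Then Σ_{i=1}^{s} α_i·(2 - e_i) = Σ_{i=1}^{s} (e_i - 2) + (q + q')/p - 2(p-1)/p. -/
/-!
Write `P_i` for the convergent numerators of `[e_1, …, e_s]`. The remainders `b_i` and the `P_i`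
solve the same recursion `x_{i+1} = e_{i+1} x_i - x_{i-1}`, with Wronskian `b_{i-1} P_i - b_i P_{i-1}`
constant equal to `p`, and `b_i ≡ q P_i (mod p)`. As `b_s = 0`, the last nonzero remainder is
`b_{s-1} = gcd(p, q) = 1`; hence `P_s = p` and `P_{s-1} ≡ q' (mod p)`, i.e. `P_{s-1} = q'`.
Read backwards, `P_s, P_{s-1}, …, P_{-1} = 0` is then a strictly decreasing remainder sequence for
`p/q'`, so by uniqueness of division with remainder `b'_{s-i} = P_{i-1}` and
`α_i = -1 + (b_{i-1} + P_{i-1}) / p`. Finally `F = b + P` solves the recursion too, so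
`∑ F_{i-1} (2 - e_i)` telescopes to `F_0 - F_{-1} + F_{s-1} - F_s = q + q' - 2 (p - 1)`.
-/

open Finset

section ThreeTermRec

variable {R : Type*} [CommRing R]

def ThreeTermRec (e x : ℕ → R) (s : ℕ) : Prop :=
  ∀ i, 1 ≤ i → i ≤ s → x (i + 1) = e i * x i - x (i - 1)

/-- `convNum e (i + 1)` is the convergent numerator `P_i` of `[e_1, e_2, …]`, so that
`convNum e 0 = P_{-1} = 0` and `convNum e 1 = P_0 = 1`. -/
def convNum (e : ℕ → R) : ℕ → R
  | 0 => 0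
  | 1 => 1
  | n + 2 => e (n + 1) * convNum e (n + 1) - convNum e n

theorem threeTermRec_convNum (e : ℕ → R) (s : ℕ) : ThreeTermRec e (convNum e) s := by
  rintro (_ | n) hn - <;> simp_all [convNum]

namespace ThreeTermRec

variable {e x y : ℕ → R} {s : ℕ}

theorem mono (hx : ThreeTermRec e x s) {t : ℕ} (hts : t ≤ s) : ThreeTermRec e x t :=
  fun i hi hit => hx i hi (hit.trans hts)

theorem const_mul (hx : ThreeTermRec e x s) (c : R) :
    ThreeTermRec e (fun i => c * x i) s := by
  intro i hi his
  simp only [hx i hi his]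
  ring

theorem reverse (hx : ThreeTermRec e x s) :
    ThreeTermRec (fun j => e (s + 1 - j)) (fun j => x (s + 1 - j)) s := by
  intro j hj hjs
  have h := hx (s + 1 - j) (by omega) (by omega)
  rw [show s + 1 - j + 1 = s + 1 - (j - 1) by omega, show s + 1 - j - 1 = s + 1 - (j + 1) by omega]
    at h
  linear_combination h

theorem wronskian_eq (hx : ThreeTermRec e x s) (hy : ThreeTermRec e y s) :
    ∀ i ≤ s, x i * y (i + 1) - x (i + 1) * y i = x 0 * y 1 - x 1 * y 0 := by
  intro i
  induction i with
  | zero => intro; rfl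
  | succ n ih =>
    intro hn
    have hxn := hx (n + 1) (by omega) hn
    have hyn := hy (n + 1) (by omega) hn
    simp only [Nat.add_sub_cancel] at hxn hyn
    rw [hxn, hyn, ← ih (by omega)]
    ring

/-- Since `x i * (2 - e i) = (x i - x (i - 1)) - (x (i + 1) - x i)`, the sum telescopes. -/
theorem sum_mul_two_sub (hx : ThreeTermRec e x s) :
    ∑ i ∈ Icc 1 s, x i * (2 - e i) = x 1 - x 0 + x s - x (s + 1) := by
  induction s with
  | zero => simp
  | succ n ih =>
    have hn := hx (n + 1) (by omega) le_rfl
    simp only [Nat.add_sub_cancel] at hn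
    rw [sum_Icc_succ_top (by omega), ih (hx.mono n.le_succ), hn]
    ring

theorem convNum_succ_eq (hx : ThreeTermRec e x s) (hxs : x s = 1) (hend : x (s + 1) = 0) :
    convNum e (s + 1) = x 0 := by
  simpa [hxs, hend, convNum] using hx.wronskian_eq (threeTermRec_convNum e s) s le_rfl

end ThreeTermRec

end ThreeTermRec

def IsRemainderSeq (x : ℕ → ℤ) (s : ℕ) : Prop :=
  ∀ i, 1 ≤ i → i ≤ s → 0 ≤ x (i + 1) ∧ x (i + 1) < x i

namespace ThreeTermRec

variable {e f x y : ℕ → ℤ} {s : ℕ}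

theorem modEq (hx : ThreeTermRec e x s) (hy : ThreeTermRec e y s) {m : ℤ}
    (h0 : x 0 ≡ y 0 [ZMOD m]) (h1 : x 1 ≡ y 1 [ZMOD m]) :
    ∀ i ≤ s + 1, x i ≡ y i [ZMOD m] := by
  have hpair : ∀ i ≤ s, x i ≡ y i [ZMOD m] ∧ x (i + 1) ≡ y (i + 1) [ZMOD m] := by
    intro i
    induction i with
    | zero => exact fun _ => ⟨h0, h1⟩
    | succ n ih =>
      intro hn
      obtain ⟨hn0, hn1⟩ := ih (by omega)
      have hxn := hx (n + 1) (by omega) hn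
      have hyn := hy (n + 1) (by omega) hn
      simp only [Nat.add_sub_cancel] at hxn hyn
      rw [hxn, hyn]
      exact ⟨hn1, (hn1.mul_left _).sub hn0⟩
  intro i hi
  rcases Nat.eq_zero_or_pos i with rfl | hpos
  · exact h0
  · simpa [Nat.sub_add_cancel hpos] using (hpair (i - 1) (by omega)).2

theorem isCoprime (hx : ThreeTermRec e x s) (h : IsCoprime (x 0) (x 1)) :
    ∀ i ≤ s, IsCoprime (x i) (x (i + 1)) := by
  intro i
  induction i with
  | zero => exact fun _ => h
  | succ n ih =>
    intro hn
    have hxn := hx (n + 1) (by omega) hn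
    simp only [Nat.add_sub_cancel] at hxn
    rw [hxn, show e (n + 1) * x (n + 1) - x n = -x n + x (n + 1) * e (n + 1) by ring]
    exact (ih (by omega)).symm.neg_right.add_mul_left_right _

theorem eq_one_of_isCoprime (hx : ThreeTermRec e x s) (h : IsCoprime (x 0) (x 1))
    (hpos : 0 < x s) (hend : x (s + 1) = 0) : x s = 1 := by
  have hcop := hx.isCoprime h s le_rfl
  rw [hend, isCoprime_zero_right, Int.isUnit_iff] at hcop
  omega

theorem convNum_modEq (hx : ThreeTermRec e x s) (hxs : x s = 1) {q' : ℤ}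
    (hinv : x 1 * q' ≡ 1 [ZMOD x 0]) : convNum e s ≡ q' [ZMOD x 0] := by
  have hxP := hx.modEq ((threeTermRec_convNum e s).const_mul (x 1)) (m := x 0)
    (by simp [convNum]) (by simp [convNum]) s (by omega)
  rw [hxs] at hxP
  calc convNum e s = convNum e s * 1 := (mul_one _).symm
    _ ≡ convNum e s * (x 1 * q') [ZMOD x 0] := hinv.symm.mul_left _
    _ = q' * (x 1 * convNum e s) := by ring
    _ ≡ q' * 1 [ZMOD x 0] := hxP.symm.mul_left _
    _ = q' := mul_one _

theorem nonneg_and_lt_succ (hx : ThreeTermRec e x s) (he : ∀ i, 1 ≤ i → i ≤ s → 2 ≤ e i)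
    (h0 : 0 ≤ x 0) (h01 : x 0 < x 1) : ∀ i ≤ s, 0 ≤ x i ∧ x i < x (i + 1) := by
  intro i
  induction i with
  | zero => exact fun _ => ⟨h0, h01⟩
  | succ n ih =>
    intro hn
    obtain ⟨hn0, hn1⟩ := ih (by omega)
    have hxn := hx (n + 1) (by omega) hn
    simp only [Nat.add_sub_cancel] at hxn
    have h2 : 0 ≤ (e (n + 1) - 2) * x (n + 1) :=
      mul_nonneg (by linarith [he (n + 1) (by omega) hn]) (by linarith)
    constructor <;> linarith

/-- Each remainder `x (i + 1) ∈ [0, x i)` forces the quotient, so a remainder sequence is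
determined by its first two terms. -/
theorem eq_of_isRemainderSeq (hx : ThreeTermRec e x s) (hy : ThreeTermRec f y s)
    (hxr : IsRemainderSeq x s) (hyr : IsRemainderSeq y s) (h0 : x 0 = y 0) (h1 : x 1 = y 1) :
    ∀ i ≤ s + 1, x i = y i := by
  have hpair : ∀ i ≤ s, x i = y i ∧ x (i + 1) = y (i + 1) := by
    intro i
    induction i with
    | zero => exact fun _ => ⟨h0, h1⟩
    | succ n ih =>
      intro hn
      obtain ⟨hn0, hn1⟩ := ih (by omega)
      refine ⟨hn1, ?_⟩
      have hxn := hx (n + 1) (by omega) hn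
      have hyn := hy (n + 1) (by omega) hn
      simp only [Nat.add_sub_cancel] at hxn hyn
      have hdvd : x (n + 1) ∣ x (n + 2) - y (n + 2) :=
        ⟨e (n + 1) - f (n + 1), by rw [hxn, hyn, hn0, hn1]; ring⟩
      have hlt : |x (n + 2) - y (n + 2)| < x (n + 1) := by
        obtain ⟨hx0, hx1⟩ := hxr (n + 1) (by omega) hn
        obtain ⟨hy0, hy1⟩ := hyr (n + 1) (by omega) hn
        rw [abs_lt]
        constructor <;> linarith
      linarith [Int.eq_zero_of_abs_lt_dvd hdvd hlt]
  intro i hi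
  rcases Nat.eq_zero_or_pos i with rfl | hpos
  · exact h0
  · simpa [Nat.sub_add_cancel hpos] using (hpair (i - 1) (by omega)).2

theorem eq_convNum_rev (hy : ThreeTermRec f y s) (hyr : IsRemainderSeq y s)
    (he : ∀ i, 1 ≤ i → i ≤ s → 2 ≤ e i) (h0 : y 0 = convNum e (s + 1))
    (h1 : y 1 = convNum e s) : ∀ j ≤ s + 1, y j = convNum e (s + 1 - j) := by
  have hP := threeTermRec_convNum e s
  have hPmono := hP.nonneg_and_lt_succ he le_rfl (by simp [convNum])
  refine hy.eq_of_isRemainderSeq hP.reverse hyr (fun j hj hjs => ?_) h0 h1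
  rw [show s + 1 - (j + 1) = s - j by omega, show s + 1 - j = s - j + 1 by omega]
  exact hPmono (s - j) (by omega)

theorem sum_affine_mul_two_sub (hx : ThreeTermRec e x s) (hy : ThreeTermRec e y s) {p : ℚ}
    (hp : p ≠ 0) :
    ∑ i ∈ Icc 1 s, (-1 + (x i : ℚ) / p + (y i : ℚ) / p) * (2 - (e i : ℚ)) =
      ∑ i ∈ Icc 1 s, ((e i : ℚ) - 2) +
        (((x 1 - x 0 + x s - x (s + 1)) + (y 1 - y 0 + y s - y (s + 1)) : ℤ) : ℚ) / p := by
  rw [← hx.sum_mul_two_sub, ← hy.sum_mul_two_sub]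
  push_cast
  rw [add_div, sum_div, sum_div, ← sum_add_distrib, ← sum_add_distrib]
  refine sum_congr rfl fun i _ => ?_
  field_simp
  ring

end ThreeTermRec

theorem stmt14_general (p : ℕ) (q q' : ℤ)
    (hq0 : 0 < q) (hqp : q < p) (hq'0 : 0 < q') (hq'p : q' < p)
    (hinv : q * q' ≡ 1 [ZMOD (p : ℤ)])
    (s : ℕ) (hs : 1 ≤ s) (e e' : ℕ → ℤ) (b b' : ℕ → ℤ)
    (he : ∀ i, 1 ≤ i → i ≤ s → 2 ≤ e i)
    (hb0 : b 0 = p) (hb1 : b 1 = q)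
    (hbrec : ∀ i, 1 ≤ i → i ≤ s → b (i + 1) = e i * b i - b (i - 1))
    (hbmono : ∀ i, 1 ≤ i → i ≤ s → 0 ≤ b (i + 1) ∧ b (i + 1) < b i)
    (hbend : b (s + 1) = 0)
    (hb'0 : b' 0 = p) (hb'1 : b' 1 = q')
    (hb'rec : ∀ i, 1 ≤ i → i ≤ s → b' (i + 1) = e' i * b' i - b' (i - 1))
    (hb'mono : ∀ i, 1 ≤ i → i ≤ s → 0 ≤ b' (i + 1) ∧ b' (i + 1) < b' i) :
    ∑ i ∈ Finset.Icc 1 s,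
        (-1 + (b i : ℚ) / p + (b' (s - i + 1) : ℚ) / p) * (2 - (e i : ℚ)) =
      ∑ i ∈ Finset.Icc 1 s, ((e i : ℚ) - 2) + ((q : ℚ) + q') / p -
        2 * ((p : ℚ) - 1) / p := by
  have hb : ThreeTermRec e b s := hbrec
  have hP := threeTermRec_convNum e s
  have hcop : IsCoprime (b 0) (b 1) := by
    obtain ⟨k, hk⟩ := hinv.dvd
    exact ⟨k, q', by rw [hb0, hb1]; linarith⟩
  have hbs : b s = 1 := hb.eq_one_of_isCoprime hcop (by linarith [hbmono s hs le_rfl]) hbend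
  have hPs1 : convNum e (s + 1) = p := by rw [hb.convNum_succ_eq hbs hbend, hb0]
  have hPs : convNum e s = q' := by
    have hPmono := hP.nonneg_and_lt_succ he le_rfl (by simp [convNum]) s le_rfl
    have hmod : convNum e s ≡ q' [ZMOD p] := hb0 ▸ hb.convNum_modEq hbs (by rwa [hb0, hb1])
    rw [← Int.emod_eq_of_lt hPmono.1 (hPs1 ▸ hPmono.2), ← Int.emod_eq_of_lt hq'0.le hq'p]
    exact hmod
  have hb'P := ThreeTermRec.eq_convNum_rev hb'rec hb'mono he (hb'0.trans hPs1.symm)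
    (hb'1.trans hPs.symm)
  have hb'i : ∀ i ∈ Icc 1 s, b' (s - i + 1) = convNum e i := fun i hi => by
    rw [mem_Icc] at hi
    rw [hb'P _ (by omega), show s + 1 - (s - i + 1) = i by omega]
  have hp : (p : ℚ) ≠ 0 := by exact_mod_cast (hq0.trans hqp).ne'
  rw [sum_congr rfl fun i hi => by rw [hb'i i hi], hb.sum_affine_mul_two_sub hP hp,
    hb0, hb1, hbs, hbend, hPs, hPs1]
  simp only [convNum]
  push_cast
  field_simp
  ring

theorem stmt14 (p : ℕ) (hp : p.Prime) (q q' : ℤ)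
    (hq0 : 0 < q) (hqp : q < p) (hq'0 : 0 < q') (hq'p : q' < p)
    (hinv : q * q' ≡ 1 [ZMOD (p : ℤ)])
    (s : ℕ) (hs : 1 ≤ s) (e e' : ℕ → ℤ) (b b' : ℕ → ℤ)
    (he : ∀ i, 1 ≤ i → i ≤ s → 2 ≤ e i)
    (he' : ∀ i, 1 ≤ i → i ≤ s → 2 ≤ e' i)
    (hb0 : b 0 = p) (hb1 : b 1 = q)
    (hbrec : ∀ i, 1 ≤ i → i ≤ s → b (i + 1) = e i * b i - b (i - 1))
    (hbmono : ∀ i, 1 ≤ i → i ≤ s → 0 ≤ b (i + 1) ∧ b (i + 1) < b i)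
    (hbend : b (s + 1) = 0)
    (hb'0 : b' 0 = p) (hb'1 : b' 1 = q')
    (hb'rec : ∀ i, 1 ≤ i → i ≤ s → b' (i + 1) = e' i * b' i - b' (i - 1))
    (hb'mono : ∀ i, 1 ≤ i → i ≤ s → 0 ≤ b' (i + 1) ∧ b' (i + 1) < b' i)
    (hb'end : b' (s + 1) = 0) :
    ∑ i ∈ Finset.Icc 1 s,
        (-1 + (b i : ℚ) / p + (b' (s - i + 1) : ℚ) / p) * (2 - (e i : ℚ)) =
      ∑ i ∈ Finset.Icc 1 s, ((e i : ℚ) - 2) + ((q : ℚ) + q') / p -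
        2 * ((p : ℚ) - 1) / p :=
  stmt14_general p q q' hq0 hqp hq'0 hq'p hinv s hs e e' b b' he hb0 hb1 hbrec hbmono hbend hb'0
    hb'1 hb'rec hb'mono
end

section
/- Let A be an arrangement of d ≥ 3 lines in the projective plane over an algebraically closed field of positive characteristic, no point lying on all d lines, and let t_n denote the number of points lying on exactly n lines. Then Σ_{n≥2} t_n ≥ d. -/
open Projectivization

/-- A point `P` of `ℙ²` lies on the line `L` (given by its dual coordinates,
i.e. as a point of the dual projective plane) when the standard pairing of
(fixed) representatives vanishes; this does not depend on the choice of
representatives. -/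
def Incident {K : Type*} [Field K]
    (P L : Projectivization K (Fin 3 → K)) : Prop :=
  ∑ i, P.rep i * L.rep i = 0

open scoped LinearAlgebra.Projectivization

/-
The lines of the arrangement and its multiple points (points on at least two of the lines) form a
configuration in the sense of `Configuration.HasPoints`: two distinct lines meet in exactly one
point, which is then a multiple point, and when there are at least three lines, not all
concurrent, no line contains all multiple points. For such configurations `#lines ≤ #points`
(de Bruijn–Erdős, via Hall's marriage theorem), which is the inequality `d ≤ Σ_{n≥2} t_n`.
-/

namespace Projectivization

variable {K : Type*} [Field K]

theorem incident_iff_orthogonal (P L : ℙ K (Fin 3 → K)) : Incident P L ↔ P.orthogonal L := by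
  conv_rhs => rw [← P.mk_rep, ← L.mk_rep]
  rfl

variable [DecidableEq K]

theorem incident_cross_left {L M : ℙ K (Fin 3 → K)} (h : L ≠ M) : Incident (cross L M) L :=
  (incident_iff_orthogonal _ _).2 (cross_orthogonal_left h)

theorem incident_cross_right {L M : ℙ K (Fin 3 → K)} (h : L ≠ M) : Incident (cross L M) M :=
  (incident_iff_orthogonal _ _).2 (cross_orthogonal_right h)

theorem eq_cross_of_incident {P L M : ℙ K (Fin 3 → K)} (h : L ≠ M) (hL : Incident P L)
    (hM : Incident P M) : P = cross L M := by
  rw [incident_iff_orthogonal] at hL hM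
  induction P with | h p hp =>
  induction L with | h l hl =>
  induction M with | h m hm =>
  rw [orthogonal_mk] at hL hM
  rw [cross_mk_of_ne hl hm h, mk_eq_mk_iff_crossProduct_eq_zero, cross_cross_eq_smul_sub_smul',
    hM, dotProduct_comm, hL, zero_smul, zero_smul, sub_zero]

end Projectivization

section Arrangement

variable {K : Type*} [Field K]

def multiplePoints (A : Finset (ℙ K (Fin 3 → K))) : Set (ℙ K (Fin 3 → K)) :=
  {P | 2 ≤ Set.ncard {L | L ∈ A ∧ Incident P L}}

theorem mem_multiplePoints_iff {A : Finset (ℙ K (Fin 3 → K))} {P : ℙ K (Fin 3 → K)} :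
    P ∈ multiplePoints A ↔ ∃ L ∈ A, ∃ M ∈ A, L ≠ M ∧ Incident P L ∧ Incident P M := by
  have hfin : {L | L ∈ A ∧ Incident P L}.Finite := A.finite_toSet.subset fun _ hL ↦ hL.1
  change 1 < Set.ncard _ ↔ _
  rw [Set.one_lt_ncard hfin]
  constructor
  · rintro ⟨L, ⟨hLA, hPL⟩, M, ⟨hMA, hPM⟩, hLM⟩
    exact ⟨L, hLA, M, hMA, hLM, hPL, hPM⟩
  · rintro ⟨L, hLA, M, hMA, hLM, hPL, hPM⟩
    exact ⟨L, ⟨hLA, hPL⟩, M, ⟨hMA, hPM⟩, hLM⟩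

section Cross

variable [DecidableEq K] {A : Finset (ℙ K (Fin 3 → K))}

theorem cross_mem_multiplePoints {L M : ℙ K (Fin 3 → K)} (hL : L ∈ A) (hM : M ∈ A) (h : L ≠ M) :
    cross L M ∈ multiplePoints A :=
  mem_multiplePoints_iff.2 ⟨L, hL, M, hM, h, incident_cross_left h, incident_cross_right h⟩

variable (A) in
theorem multiplePoints_subset_image2_cross :
    multiplePoints A ⊆ Set.image2 cross (A : Set (ℙ K (Fin 3 → K))) A := by
  intro P hP
  obtain ⟨L, hL, M, hM, hLM, hPL, hPM⟩ := mem_multiplePoints_iff.1 hP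
  exact ⟨L, hL, M, hM, (eq_cross_of_incident hLM hPL hPM).symm⟩

theorem exists_mem_multiplePoints_not_incident (hA : 3 ≤ A.card)
    (hnotall : ∀ P, ∃ L ∈ A, ¬ Incident P L) {l : ℙ K (Fin 3 → K)} (hl : l ∈ A) :
    ∃ P ∈ multiplePoints A, ¬ Incident P l := by
  classical
  obtain ⟨m, hm, n, hn, hmn⟩ := Finset.one_lt_card.1 <| show 1 < (A.erase l).card by
    rw [Finset.card_erase_of_mem hl]; omega
  have hml : m ≠ l := Finset.ne_of_mem_erase hm
  replace hm := Finset.mem_of_mem_erase hm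
  replace hn := Finset.mem_of_mem_erase hn
  by_cases hpl : Incident (cross m n) l
  swap
  · exact ⟨cross m n, cross_mem_multiplePoints hm hn hmn, hpl⟩
  obtain ⟨k, hk, hpk⟩ := hnotall (cross m n)
  have hkm : k ≠ m := by rintro rfl; exact hpk (incident_cross_left hmn)
  refine ⟨cross k m, cross_mem_multiplePoints hk hm hkm, fun hql ↦ hpk ?_⟩
  have hpq : cross m n = cross k m := by
    rw [eq_cross_of_incident hml (incident_cross_left hmn) hpl,
      eq_cross_of_incident hml (incident_cross_right hkm) hql]
  exact hpq ▸ incident_cross_left hkm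

end Cross

theorem finite_multiplePoints (A : Finset (ℙ K (Fin 3 → K))) : (multiplePoints A).Finite := by
  classical
  exact (A.finite_toSet.image2 _ A.finite_toSet).subset (multiplePoints_subset_image2_cross A)

instance (A : Finset (ℙ K (Fin 3 → K))) : Membership (multiplePoints A) A :=
  ⟨fun l P ↦ Incident P.1 l.1⟩

abbrev multiplePointsHasPoints [DecidableEq K] {A : Finset (ℙ K (Fin 3 → K))} (hA : 3 ≤ A.card)
    (hnotall : ∀ P, ∃ L ∈ A, ¬ Incident P L) : Configuration.HasPoints (multiplePoints A) A where
  exists_point l :=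
    let ⟨P, hP, hPl⟩ := exists_mem_multiplePoints_not_incident hA hnotall l.2
    ⟨⟨P, hP⟩, hPl⟩
  exists_line P :=
    let ⟨L, hL, hPL⟩ := hnotall P
    ⟨⟨L, hL⟩, hPL⟩
  eq_or_eq hPL hQL hPM hQM := or_iff_not_imp_right.2 fun hLM ↦
    Subtype.ext <| (eq_cross_of_incident (Subtype.coe_ne_coe.2 hLM) hPL hPM).trans
      (eq_cross_of_incident (Subtype.coe_ne_coe.2 hLM) hQL hQM).symm
  mkPoint {L M} h := ⟨cross L M, cross_mem_multiplePoints L.2 M.2 (Subtype.coe_ne_coe.2 h)⟩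
  mkPoint_ax h :=
    ⟨incident_cross_left (Subtype.coe_ne_coe.2 h), incident_cross_right (Subtype.coe_ne_coe.2 h)⟩

theorem card_le_ncard_multiplePoints {A : Finset (ℙ K (Fin 3 → K))} (hA : 3 ≤ A.card)
    (hnotall : ∀ P, ∃ L ∈ A, ¬ Incident P L) : A.card ≤ (multiplePoints A).ncard := by
  classical
  let := multiplePointsHasPoints hA hnotall
  let := (finite_multiplePoints A).fintype
  rw [← Nat.card_coe_set_eq, Nat.card_eq_fintype_card, ← Fintype.card_coe]
  exact Configuration.HasPoints.card_le (multiplePoints A) A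

end Arrangement

theorem stmt17_general (K : Type*) [Field K]
    (A : Finset (Projectivization K (Fin 3 → K))) (d : ℕ)
    (hcard : A.card = d) (hd : 3 ≤ d)
    (hnotall : ∀ P : Projectivization K (Fin 3 → K), ∃ L ∈ A, ¬ Incident P L) :
    d ≤ Set.ncard {P : Projectivization K (Fin 3 → K) |
      2 ≤ Set.ncard {L : Projectivization K (Fin 3 → K) | L ∈ A ∧ Incident P L}} := by
  subst hcard
  exact card_le_ncard_multiplePoints hd hnotall

/-- For an arrangement of `d ≥ 3` distinct lines in `ℙ²` over an algebraically
closed field of positive characteristic, with no point lying on all `d` lines,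
the number of points lying on at least two of the lines (i.e. `Σ_{n≥2} t_n`)
is at least `d`. -/
theorem stmt17 (K : Type*) [Field K] [IsAlgClosed K] (c : ℕ) [CharP K c]
    (hc : c ≠ 0)
    (A : Finset (Projectivization K (Fin 3 → K))) (d : ℕ)
    (hcard : A.card = d) (hd : 3 ≤ d)
    (hnotall : ∀ P : Projectivization K (Fin 3 → K), ∃ L ∈ A, ¬ Incident P L) :
    d ≤ Set.ncard {P : Projectivization K (Fin 3 → K) |
      2 ≤ Set.ncard {L : Projectivization K (Fin 3 → K) | L ∈ A ∧ Incident P L}} :=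
  stmt17_general K A d hcard hd hnotall
end
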